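/- If the one-step reachable map R satisfies monotonicity (A ⊆ B implies R(A) ⊆ R(B)) and there exists k* such that R^{k*+1}(X) ⊆ X, then the set F_{k*} defined by the iteration F_{k+1} = R(F_k) ∩ X with F_0 = X satisfies R(F_{k*}) ⊆ F_{k*}, i.e., F_{k*} is invariant under R. -/
import Mathlib

/-- If the one-step reachable map `R` is monotone and `R^[k*+1] X ⊆ X`, then the set
`F k*` defined by `F 0 = X`, `F (k+1) = R (F k) ∩ X` satisfies `R (F k*) ⊆ F k*`. -/
theorem stmt_0 {α : Type*} (R : Set α → Set α) (hR : Monotone R)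
    (X : Set α) (F : ℕ → Set α) (hF0 : F 0 = X)
    (hFs : ∀ k, F (k + 1) = R (F k) ∩ X)
    (kstar : ℕ) (hk : R^[kstar + 1] X ⊆ X) :
    R (F kstar) ⊆ F kstar := by
  have hsub : ∀ k, F k ⊆ R^[k] X := by
    intro k
    induction k with
    | zero => simp [hF0]
    | succ n ih =>
      rw [hFs, Function.iterate_succ_apply']
      exact (Set.inter_subset_left).trans (hR ih)
  have hanti : ∀ k, F (k + 1) ⊆ F k := by
    intro k
    induction k with
    | zero => rw [hFs, hF0]; exact Set.inter_subset_right
    | succ n ih =>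
      rw [hFs (n+1)]
      calc R (F (n+1)) ∩ X ⊆ R (F n) ∩ X := Set.inter_subset_inter (hR ih) le_rfl
        _ = F (n+1) := (hFs n).symm
  have hRX : R (F kstar) ⊆ X := by
    have : R (F kstar) ⊆ R^[kstar + 1] X := by
      rw [Function.iterate_succ_apply']
      exact hR (hsub kstar)
    exact this.trans hk
  have : R (F kstar) ⊆ F (kstar + 1) := by
    rw [hFs]; exact Set.subset_inter le_rfl hRX
  exact this.trans (hanti kstar)
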